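/- Let α, β ∈ (0,1), let k, k₀, k₁, b₂ ∈ ℝ with k ≠ 0, and set a₁ = b₂/(2k). Then u(x,t) = k₀ + k₁ E_α(-(b₂/2) k k₀ t^α) E_β(k x^β) is an exact solution of the nonlinear time-space fractional diffusion–convection equation: for all x > 0 and t > 0, (C_t^α u)(x,t) = a₁ ((C_x^β u)(x,t))² + a₁ u (C_x^β (C_x^β u))(x,t) - b₂ u (C_x^β u)(x,t), where u = u(x,t). -/

import Mathlib

/-- The two-parameter Mittag-Leffler function `E_{β,γ}(z) = Σ_{r=0}^∞ z^r / Γ(βr + γ)`. -/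
noncomputable def mittagLeffler (β γ z : ℝ) : ℝ :=
  ∑' r : ℕ, z ^ r / Real.Gamma (β * r + γ)

/-- Caputo fractional partial derivative of order `α` with respect to `t`. -/
noncomputable def caputoT (α : ℝ) (u : ℝ → ℝ → ℝ) : ℝ → ℝ → ℝ := fun x t =>
  (1 / Real.Gamma (1 - α)) * ∫ s in (0:ℝ)..t, deriv (fun s' => u x s') s * (t - s) ^ (-α)

/-- Caputo fractional partial derivative of order `β` with respect to `x`. -/
noncomputable def caputoX (β : ℝ) (u : ℝ → ℝ → ℝ) : ℝ → ℝ → ℝ := fun x t =>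
  (1 / Real.Gamma (1 - β)) * ∫ y in (0:ℝ)..x, deriv (fun y' => u y' t) y * (x - y) ^ (-β)

/-- The exact solution `u(x,t) = k₀ + k₁ E_α(-(b₂/2) k k₀ t^α) E_β(k x^β)`. -/
noncomputable def uSol (α β k k₀ k₁ b₂ : ℝ) : ℝ → ℝ → ℝ := fun x t =>
  k₀ + k₁ * mittagLeffler α 1 (-(b₂ / 2) * k * k₀ * t ^ α) * mittagLeffler β 1 (k * x ^ β)

/-!
Both factors of `u` are eigenfunctions of the Caputo derivative: expanding `E_γ(λ s^γ)` termwise,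
the Caputo derivative of each power `s^{γ(r+1)}` is a Beta integral, and the resulting series is
`λ E_γ(λ t^γ)`. Hence `C_t^α u = λ k₁ E_α E_β`, `C_x^β u = k k₁ E_α E_β` and
`C_x^β C_x^β u = k² k₁ E_α E_β`, and the equation becomes an algebraic identity in which the
`k₀`-terms cancel because `λ = -(b₂/2) k k₀`. Termwise differentiation and integration are
justified by the growth bound `(x - 1)^γ Γ(x) ≤ Γ(x + γ)`, a consequence of the log-convexity of `Γ`.
-/

open Real MeasureTheory Set Filter

lemma Real.rpow_mul_Gamma_le_Gamma_add {x γ : ℝ} (hx : 1 < x) (hγ : 0 < γ) :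
    (x - 1) ^ γ * Gamma x ≤ Gamma (x + γ) := by
  have hx0 : 0 < x - 1 := by linarith
  have hGx : 0 < Gamma x := Gamma_pos_of_pos (by linarith)
  have hslope := convexOn_log_Gamma.slope_mono_adjacent (x := x - 1) (y := x) (z := x + γ)
    (mem_Ioi.2 hx0) (mem_Ioi.2 (by linarith)) (by linarith) (by linarith)
  have hstep : Gamma x = (x - 1) * Gamma (x - 1) := by
    simpa using Gamma_add_one hx0.ne'
  have hlog : log (Gamma x) - log (Gamma (x - 1)) = log (x - 1) := by
    rw [hstep, log_mul hx0.ne' (Gamma_pos_of_pos hx0).ne']; ring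
  simp only [Function.comp_apply, hlog, sub_sub_cancel, div_one, add_sub_cancel_left] at hslope
  rw [← log_le_log_iff (by positivity) (Gamma_pos_of_pos (by linarith)),
    log_mul (by positivity) hGx.ne', log_rpow hx0]
  rw [le_div_iff₀ hγ] at hslope
  linarith

lemma summable_succ_mul_pow_div_Gamma {γ c R : ℝ} (hγ : 0 < γ) (hc : 0 < c) (hR : 0 ≤ R) :
    Summable fun r : ℕ => ((r : ℝ) + 1) * R ^ r / Gamma (γ * r + c) := by
  have hΓ : ∀ r : ℕ, 0 < Gamma (γ * r + c) := fun r => Gamma_pos_of_pos (by positivity)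
  have hlin : Tendsto (fun r : ℕ => γ * r + (c - 1)) atTop atTop :=
    tendsto_atTop_add_const_right _ _ (tendsto_natCast_atTop_atTop.const_mul_atTop hγ)
  have hpow : Tendsto (fun r : ℕ => (γ * r + (c - 1)) ^ γ) atTop atTop :=
    (tendsto_rpow_atTop hγ).comp hlin
  -- Ratio test: consecutive terms have ratio at most `(r + 2) / (r + 1) * R / (γ r + c - 1) ^ γ`.
  refine summable_of_ratio_norm_eventually_le (r := 1 / 2) (by norm_num) ?_
  filter_upwards [hlin.eventually_gt_atTop 0, hpow.eventually_ge_atTop (4 * R)] with r h1 h4R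
  have hgrowth := Real.rpow_mul_Gamma_le_Gamma_add (by linarith) hγ (x := γ * r + c)
  rw [Real.norm_of_nonneg (by have := hΓ (r + 1); positivity),
    Real.norm_of_nonneg (by have := hΓ r; positivity), div_le_iff₀ (hΓ _)]
  push_cast
  rw [show γ * ((r : ℝ) + 1) + c = γ * r + c + γ by ring]
  rw [← add_sub_assoc] at h4R
  calc ((r : ℝ) + 1 + 1) * R ^ (r + 1) ≤ 1 / 2 * (((r : ℝ) + 1) * R ^ r) * (4 * R) := by
        rw [pow_succ]
        nlinarith [mul_nonneg (mul_nonneg (Nat.cast_nonneg (α := ℝ) r) (pow_nonneg hR r)) hR]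
    _ ≤ 1 / 2 * (((r : ℝ) + 1) * R ^ r) * (γ * r + c - 1) ^ γ := by gcongr
    _ = 1 / 2 * (((r : ℝ) + 1) * R ^ r / Gamma (γ * r + c)) *
          ((γ * r + c - 1) ^ γ * Gamma (γ * r + c)) := by field_simp [(hΓ r).ne']
    _ ≤ _ := by gcongr

lemma summable_mittagLeffler {γ c : ℝ} (hγ : 0 < γ) (hc : 0 < c) (z : ℝ) :
    Summable fun r : ℕ => z ^ r / Gamma (γ * r + c) := by
  refine .of_norm_bounded (summable_succ_mul_pow_div_Gamma hγ hc (abs_nonneg z)) fun r => ?_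
  have hΓ : 0 < Gamma (γ * r + c) := Gamma_pos_of_pos (by positivity)
  rw [norm_div, norm_pow, Real.norm_eq_abs, Real.norm_of_nonneg hΓ.le]
  gcongr
  exact le_mul_of_one_le_left (by positivity) (by linarith [Nat.cast_nonneg (α := ℝ) r])

lemma hasDerivAt_mittagLeffler {γ c : ℝ} (hγ : 0 < γ) (hc : 0 < c) (z : ℝ) :
    HasDerivAt (mittagLeffler γ c)
      (∑' r : ℕ, ((r : ℝ) + 1) * z ^ r / Gamma (γ * (r + 1) + c)) z := by
  have hsplit : ∀ w, mittagLeffler γ c w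
      = 1 / Gamma c + ∑' r : ℕ, w ^ (r + 1) / Gamma (γ * (r + 1) + c) := fun w => by
    rw [mittagLeffler, (summable_mittagLeffler hγ hc w).tsum_eq_zero_add]
    push_cast
    simp
  set ρ := |z| + 1
  have hz : z ∈ Metric.ball (0 : ℝ) ρ := by simp [ρ]
  have hbound : Summable fun r : ℕ => ((r : ℝ) + 1) * ρ ^ r / Gamma (γ * (r + 1) + c) := by
    simpa only [mul_add, mul_one, add_assoc] using
      summable_succ_mul_pow_div_Gamma hγ (add_pos hγ hc) (by positivity : 0 ≤ ρ)
  have hsucc : Summable fun r : ℕ => z ^ (r + 1) / Gamma (γ * (r + 1) + c) :=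
    by simpa only [Nat.cast_add, Nat.cast_one] using
      (summable_nat_add_iff 1).2 (summable_mittagLeffler hγ hc z)
  rw [funext hsplit]
  refine HasDerivAt.const_add _ <| hasDerivAt_tsum_of_isPreconnected
    (g := fun (r : ℕ) w => w ^ (r + 1) / Gamma (γ * (r + 1) + c)) hbound Metric.isOpen_ball
    (convex_ball (0 : ℝ) ρ).isPreconnected
    (fun r w _ => by simpa using (hasDerivAt_pow (r + 1) w).div_const (Gamma (γ * (r + 1) + c)))
    (fun r w hw => ?_) hz hsucc hz
  have hΓ : 0 < Gamma (γ * (r + 1) + c) := Gamma_pos_of_pos (by positivity)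
  have hw' : |w| ≤ ρ := (mem_ball_zero_iff.1 hw).le
  rw [norm_div, norm_mul, norm_pow, Real.norm_eq_abs, Real.norm_eq_abs, Real.norm_of_nonneg hΓ.le,
    abs_of_nonneg (by positivity : (0 : ℝ) ≤ r + 1)]
  gcongr

lemma hasDerivAt_mittagLeffler_mul_rpow {γ : ℝ} (hγ : 0 < γ) (lam : ℝ) {s : ℝ} (hs : 0 < s) :
    HasDerivAt (fun s => mittagLeffler γ 1 (lam * s ^ γ))
      (∑' r : ℕ, lam ^ (r + 1) / Gamma (γ * (r + 1)) * s ^ (γ * (r + 1) - 1)) s := by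
  have h := (hasDerivAt_mittagLeffler hγ one_pos (lam * s ^ γ)).comp s
    ((hasDerivAt_rpow_const (p := γ) (Or.inl hs.ne')).const_mul lam)
  refine h.congr_deriv ?_
  rw [← tsum_mul_right]
  refine tsum_congr fun r => ?_
  have hr : 0 < γ * (r + 1) := by positivity
  rw [Gamma_add_one hr.ne', mul_pow, ← rpow_natCast (s ^ γ), ← rpow_mul hs.le,
    show γ * (r + 1) - 1 = γ * r + (γ - 1) by ring, rpow_add hs, pow_succ]
  field_simp [(Gamma_pos_of_pos hr).ne']

lemma integral_rpow_mul_sub_rpow {a b t : ℝ} (ha : 0 < a) (hb : 0 < b) (ht : 0 < t) :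
    ∫ s in (0 : ℝ)..t, s ^ (a - 1) * (t - s) ^ (b - 1)
      = Gamma a * Gamma b / Gamma (a + b) * t ^ (a + b - 1) := by
  have hΓ : (Gamma (a + b) : ℂ) ≠ 0 := Complex.ofReal_ne_zero.2 (Gamma_pos_of_pos (by linarith)).ne'
  have hbeta : Complex.betaIntegral a b = (Gamma a * Gamma b / Gamma (a + b) : ℝ) := by
    have h := Complex.Gamma_mul_Gamma_eq_betaIntegral (s := a) (t := b) (by simpa) (by simpa)
    rw [← Complex.ofReal_add, Complex.Gamma_ofReal, Complex.Gamma_ofReal,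
      Complex.Gamma_ofReal] at h
    push_cast
    rw [eq_div_iff hΓ, h, mul_comm]
  apply Complex.ofReal_injective
  rw [← intervalIntegral.integral_ofReal, Complex.ofReal_mul, Complex.ofReal_cpow ht.le, ← hbeta]
  push_cast
  rw [mul_comm, ← Complex.betaIntegral_scaled _ _ ht]
  refine intervalIntegral.integral_congr fun s hs => ?_
  rw [uIcc_of_le ht.le] at hs
  rw [Complex.ofReal_cpow hs.1, Complex.ofReal_cpow (sub_nonneg.2 hs.2)]
  push_cast
  rfl

lemma intervalIntegrable_rpow_mul_sub_rpow {a b t : ℝ} (ha : 0 < a) (hb : 0 < b) (ht : 0 < t) :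
    IntervalIntegrable (fun s => s ^ (a - 1) * (t - s) ^ (b - 1)) volume 0 t := by
  refine intervalIntegral.intervalIntegrable_of_integral_ne_zero ?_
  rw [integral_rpow_mul_sub_rpow ha hb ht]
  have := Gamma_pos_of_pos ha
  have := Gamma_pos_of_pos hb
  have := Gamma_pos_of_pos (add_pos ha hb)
  positivity

noncomputable def caputoDeriv (γ : ℝ) (f : ℝ → ℝ) (t : ℝ) : ℝ :=
  (1 / Gamma (1 - γ)) * ∫ s in (0 : ℝ)..t, deriv f s * (t - s) ^ (-γ)

lemma caputoT_apply (α : ℝ) (u : ℝ → ℝ → ℝ) (x t : ℝ) :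
    caputoT α u x t = caputoDeriv α (u x) t := rfl

lemma caputoX_apply (β : ℝ) (u : ℝ → ℝ → ℝ) (x t : ℝ) :
    caputoX β u x t = caputoDeriv β (fun y => u y t) x := rfl

namespace caputoDeriv

variable {γ t : ℝ}

lemma const_add (d : ℝ) (f : ℝ → ℝ) :
    caputoDeriv γ (fun s => d + f s) t = caputoDeriv γ f t := by
  simp only [caputoDeriv, deriv_const_add']

lemma const_mul (c : ℝ) (f : ℝ → ℝ) :
    caputoDeriv γ (fun s => c * f s) t = c * caputoDeriv γ f t := by
  simp only [caputoDeriv, deriv_const_mul_field', mul_assoc, intervalIntegral.integral_const_mul]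
  ring

lemma congr_of_eqOn {f g : ℝ → ℝ} (hfg : EqOn f g (Ioi 0)) (ht : 0 < t) :
    caputoDeriv γ f t = caputoDeriv γ g t := by
  unfold caputoDeriv
  congr 1
  refine intervalIntegral.integral_congr_ae (ae_of_all _ fun s hs => ?_)
  rw [uIoc_of_le ht.le] at hs
  rw [(hfg.eventuallyEq_of_mem (Ioi_mem_nhds hs.1)).deriv_eq]

end caputoDeriv

lemma integral_mittagLeffler_caputo_term {γ t : ℝ} (hγ : γ ∈ Ioo 0 1) (ht : 0 < t) (L : ℝ)
    (r : ℕ) :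
    ∫ s in (0 : ℝ)..t,
        L ^ (r + 1) / Gamma (γ * (r + 1)) * (s ^ (γ * (r + 1) - 1) * (t - s) ^ (1 - γ - 1))
      = Gamma (1 - γ) * L * ((L * t ^ γ) ^ r / Gamma (γ * r + 1)) := by
  have ha : 0 < γ * (r + 1) := by have := hγ.1; positivity
  rw [intervalIntegral.integral_const_mul, integral_rpow_mul_sub_rpow ha (sub_pos.2 hγ.2) ht,
    show γ * (r + 1) + (1 - γ) = γ * r + 1 by ring, add_sub_cancel_right, mul_pow,
    ← rpow_natCast (t ^ γ), ← rpow_mul ht.le, pow_succ, mul_comm γ (r : ℝ)]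
  field_simp [(Gamma_pos_of_pos ha).ne']

theorem caputoDeriv_mittagLeffler {γ : ℝ} (hγ : γ ∈ Ioo 0 1) (lam : ℝ) {t : ℝ} (ht : 0 < t) :
    caputoDeriv γ (fun s => mittagLeffler γ 1 (lam * s ^ γ)) t
      = lam * mittagLeffler γ 1 (lam * t ^ γ) := by
  have ha : ∀ r : ℕ, 0 < γ * (r + 1) := fun r => by have := hγ.1; positivity
  set F : ℝ → ℕ → ℝ → ℝ := fun L r s =>
    L ^ (r + 1) / Gamma (γ * (r + 1)) * (s ^ (γ * (r + 1) - 1) * (t - s) ^ (1 - γ - 1))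
  have hexpand : ∀ s ∈ Ioc 0 t,
      deriv (fun s => mittagLeffler γ 1 (lam * s ^ γ)) s * (t - s) ^ (1 - γ - 1)
        = ∑' r, F lam r s := fun s hs => by
    rw [(hasDerivAt_mittagLeffler_mul_rpow hγ.1 lam hs.1).deriv, ← tsum_mul_right]
    simp only [F, mul_assoc]
  have hint : ∀ r, IntegrableOn (F lam r) (Ioc 0 t) := fun r =>
    ((intervalIntegrable_rpow_mul_sub_rpow (ha r) (sub_pos.2 hγ.2) ht).const_mul _).1
  have hnorm : ∀ r, ∀ s ∈ Ioc 0 t, ‖F lam r s‖ = F |lam| r s := fun r s hs => by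
    have hΓ := Gamma_pos_of_pos (ha r)
    have hs₁ := rpow_nonneg hs.1.le (γ * (r + 1) - 1)
    have hs₂ := rpow_nonneg (sub_nonneg.2 hs.2) (1 - γ - 1)
    simp only [F, norm_mul, norm_div, norm_pow, Real.norm_eq_abs, abs_of_pos hΓ,
      abs_of_nonneg hs₁, abs_of_nonneg hs₂]
  have hsum : Summable fun r => ∫ s in Ioc 0 t, ‖F lam r s‖ := by
    simp_rw [setIntegral_congr_fun measurableSet_Ioc (hnorm _),
      ← intervalIntegral.integral_of_le ht.le, F, integral_mittagLeffler_caputo_term hγ ht]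
    exact (summable_mittagLeffler hγ.1 one_pos _).mul_left _
  rw [caputoDeriv, show -γ = 1 - γ - 1 by ring, intervalIntegral.integral_of_le ht.le,
    setIntegral_congr_fun measurableSet_Ioc hexpand,
    ← integral_tsum_of_summable_integral_norm hint hsum]
  simp_rw [← intervalIntegral.integral_of_le ht.le, F, integral_mittagLeffler_caputo_term hγ ht,
    tsum_mul_left]
  field_simp [(Gamma_pos_of_pos (sub_pos.2 hγ.2)).ne']
  rfl

theorem nonlinear_fractional_diffusion_convection_exact_general (α β k k₀ k₁ b₂ : ℝ)
    (hα : α ∈ Set.Ioo (0 : ℝ) 1) (hβ : β ∈ Set.Ioo (0 : ℝ) 1) :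
    ∀ x : ℝ, 0 < x → ∀ t : ℝ, 0 < t →
      caputoT α (uSol α β k k₀ k₁ b₂) x t =
        (b₂ / (2 * k)) * (caputoX β (uSol α β k k₀ k₁ b₂) x t) ^ 2
          + (b₂ / (2 * k)) * uSol α β k k₀ k₁ b₂ x t *
            caputoX β (caputoX β (uSol α β k k₀ k₁ b₂)) x t
          - b₂ * uSol α β k k₀ k₁ b₂ x t * caputoX β (uSol α β k k₀ k₁ b₂) x t := by
  intro x hx t ht
  set u := uSol α β k k₀ k₁ b₂
  set lam := -(b₂ / 2) * k * k₀
  set T := mittagLeffler α 1 (lam * t ^ α)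
  set X := mittagLeffler β 1 (k * x ^ β)
  have hT : caputoT α u x t = k₁ * X * (lam * T) := by
    have hux : u x = fun s => k₀ + k₁ * X * mittagLeffler α 1 (lam * s ^ α) :=
      funext fun s => by simp only [u, uSol, X, lam]; ring
    rw [caputoT_apply, hux, caputoDeriv.const_add, caputoDeriv.const_mul,
      caputoDeriv_mittagLeffler hα lam ht]
  have hX : ∀ y, 0 < y → caputoX β u y t = k₁ * T * (k * mittagLeffler β 1 (k * y ^ β)) :=
    fun y hy => by
      have hut : (fun y => u y t) = fun y => k₀ + k₁ * T * mittagLeffler β 1 (k * y ^ β) := rfl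
      rw [caputoX_apply, hut, caputoDeriv.const_add, caputoDeriv.const_mul,
        caputoDeriv_mittagLeffler hβ k hy]
  have hXX : caputoX β (caputoX β u) x t = k₁ * T * (k * (k * X)) := by
    rw [caputoX_apply, caputoDeriv.congr_of_eqOn (fun y hy => hX y hy) hx,
      caputoDeriv.const_mul, caputoDeriv.const_mul, caputoDeriv_mittagLeffler hβ k hx]
  rw [hT, hX x hx, hXX, show u x t = k₀ + k₁ * T * X from rfl]
  field_simp
  ring

/-- **Exact solution of the nonlinear time-space fractional diffusion–convection
equation** `C_t^α u = a₁ (C_x^β u)² + a₁ u C_x^β(C_x^β u) - b₂ u C_x^β u`, where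
`a₁ = b₂/(2k)`, for all `x > 0`, `t > 0`. -/
theorem nonlinear_fractional_diffusion_convection_exact (α β k k₀ k₁ b₂ : ℝ)
    (hα : α ∈ Set.Ioo (0 : ℝ) 1) (hβ : β ∈ Set.Ioo (0 : ℝ) 1) (hk : k ≠ 0) :
    ∀ x : ℝ, 0 < x → ∀ t : ℝ, 0 < t →
      caputoT α (uSol α β k k₀ k₁ b₂) x t =
        (b₂ / (2 * k)) * (caputoX β (uSol α β k k₀ k₁ b₂) x t) ^ 2
          + (b₂ / (2 * k)) * uSol α β k k₀ k₁ b₂ x t *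
            caputoX β (caputoX β (uSol α β k k₀ k₁ b₂)) x t
          - b₂ * uSol α β k k₀ k₁ b₂ x t * caputoX β (uSol α β k k₀ k₁ b₂) x t :=
  nonlinear_fractional_diffusion_convection_exact_general α β k k₀ k₁ b₂ hα hβ
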